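/- arXiv:2501.03024 — 2 statements merged into one kernel-verified Lean document; each statement's English description precedes it below -/
import Mathlib

section
/- Define a sequence (Q_n) in the field of rational functions ℚ(X) by Q_0 = 1, Q_1 = X, and Q_{n+1} = (Q_n^2 − 1)/Q_{n−1} for n ≥ 1 (all Q_n with n ≥ 1 are nonzero, so the recursion is well defined). Then every Q_n is a polynomial with integer coefficients, i.e., lies in the image of ℤ[X] in ℚ(X). -/
/-!
The sequence is `Qₙ = Sₙ(X)`, where `Sₙ(X) = Uₙ(X/2)` are the Chebyshev polynomials with
`S₀ = 1`, `S₁ = X`, `Sₙ₊₂ = X Sₙ₊₁ - Sₙ`, which have integer coefficients. The Cassini-type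
identity `Sₙ² + Sₙ₊₁² - X Sₙ Sₙ₊₁ = 1` turns into `Sₙ₊₂ Sₙ = Sₙ₊₁² - 1`, so the `Sₙ` satisfy the
recursion, and they never vanish because `Sₙ(2) = n + 1`.
-/

open Polynomial Polynomial.Chebyshev

theorem Polynomial.Chebyshev.S_add_two_mul_S (R : Type*) [CommRing R] (n : ℤ) :
    S R (n + 2) * S R n = S R (n + 1) ^ 2 - 1 := by
  linear_combination S R n * S_add_two R n - S_sq_add_S_sq R n

theorem Polynomial.Chebyshev.S_natCast_ne_zero (R : Type*) [CommRing R] [CharZero R] (n : ℕ) :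
    S R n ≠ 0 := by
  intro h
  have h2 := S_eval_two R n
  rw [h, eval_zero] at h2
  exact_mod_cast h2.symm

theorem eq_of_div_recursion {F : Type*} [DivisionRing F] {P Q : ℕ → F}
    (hP : ∀ n, P (n + 2) * P n = P (n + 1) ^ 2 - 1) (hP_ne : ∀ n, P n ≠ 0)
    (h0 : Q 0 = P 0) (h1 : Q 1 = P 1) (hQ : ∀ n ≥ 1, Q (n + 1) = (Q n ^ 2 - 1) / Q (n - 1)) :
    Q = P := by
  have hpair : ∀ n, Q n = P n ∧ Q (n + 1) = P (n + 1) := by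
    intro n
    induction n with
    | zero => exact ⟨h0, h1⟩
    | succ k ih =>
      refine ⟨ih.2, ?_⟩
      rw [hQ (k + 1) (Nat.le_add_left 1 k), Nat.add_sub_cancel, ih.1, ih.2]
      exact (eq_div_of_mul_eq (hP_ne k) (hP k)).symm
  exact funext fun n => (hpair n).1

/-- define `(Qₙ)` in `ℚ(X)` by `Q₀ = 1`, `Q₁ = X`, and
`Qₙ₊₁ = (Qₙ² − 1)/Qₙ₋₁` for `n ≥ 1`.  Then all `Qₙ` with `n ≥ 1` are nonzero (so the
recursion is well defined), and every `Qₙ` lies in the image of `ℤ[X]` in `ℚ(X)`. -/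
theorem stmt_4 (Q : ℕ → RatFunc ℚ) (h0 : Q 0 = 1) (h1 : Q 1 = RatFunc.X)
    (hrec : ∀ n ≥ 1, Q (n + 1) = (Q n ^ 2 - 1) / Q (n - 1)) :
    (∀ n ≥ 1, Q n ≠ 0) ∧
    ∀ n : ℕ, ∃ p : Polynomial ℤ,
      Q n = algebraMap (Polynomial ℚ) (RatFunc ℚ) (p.map (Int.castRingHom ℚ)) := by
  set P : ℕ → RatFunc ℚ := fun n => algebraMap ℚ[X] (RatFunc ℚ) (S ℚ n) with hP_def
  have hP_ne (n : ℕ) : P n ≠ 0 :=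
    (map_ne_zero_iff _ (RatFunc.algebraMap_injective ℚ)).mpr (S_natCast_ne_zero ℚ n)
  have hP (n : ℕ) : P (n + 2) * P n = P (n + 1) ^ 2 - 1 := by
    simpa only [hP_def, Nat.cast_add, Nat.cast_ofNat, Nat.cast_one, map_mul, map_pow, map_sub,
      map_one] using congrArg (algebraMap ℚ[X] (RatFunc ℚ)) (S_add_two_mul_S ℚ n)
  have hQP : Q = P := eq_of_div_recursion hP hP_ne
    (by simp [hP_def, h0]) (by simp [hP_def, h1, RatFunc.algebraMap_X]) hrec
  subst hQP
  exact ⟨fun n _ => hP_ne n, fun n => ⟨S ℤ n, by rw [map_S]⟩⟩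
end

section
/- Let σ be the ring automorphism of the Laurent polynomial ring ℤ[y, y^{−1}] determined by σ(y) = y^{−1}. Then the subring of elements fixed by σ is exactly the subring generated by y + y^{−1}; that is, a Laurent polynomial p satisfies σ(p) = p if and only if p = f(y + y^{−1}) for some polynomial f ∈ ℤ[X]. -/
/-!
A ring endomorphism of `ℤ[y, y⁻¹]` is determined by the image of `y`, so `σ` is `invert`.
Since `yⁿ + y⁻ⁿ` is the Dickson polynomial `Dₙ(y + y⁻¹)`, every `q + invert q` lies in
`ℤ[y + y⁻¹]`; and a Laurent polynomial `p` fixed by `invert` equals `q + invert q - p₀`,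
where `q` keeps the terms of `p` of nonnegative degree and `p₀` is its constant term.
-/

open Polynomial

namespace LaurentPolynomial

theorem ringHom_ext_of_T_one {R S : Type*} [Semiring R] [Semiring S]
    {f g : R[T;T⁻¹] →+* S} (hC : ∀ a, f (C a) = g (C a)) (hT : f (T 1) = g (T 1)) :
    f = g := by
  have hT_neg : f (T (-1)) = g (T (-1)) := calc
    f (T (-1)) = f (T (-1)) * g (T 1 * T (-1)) := by rw [← T_add]; simp
    _ = f (T (-1) * T 1) * g (T (-1)) := by rw [map_mul, map_mul, ← hT, ← mul_assoc]
    _ = g (T (-1)) := by rw [← T_add]; simp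
  have hT_all (n : ℤ) : f (T n) = g (T n) := by
    induction n using Int.induction_on with
    | zero => simp [T_zero]
    | succ n ih => rw [T_add, map_mul, map_mul, ih, hT]
    | pred n ih => rw [sub_eq_add_neg, T_add, map_mul, map_mul, ih, hT_neg]
  refine RingHom.ext fun p => ?_
  induction p using LaurentPolynomial.induction_on' with
  | add p q hp hq => rw [map_add, map_add, hp, hq]
  | C_mul_T n a => rw [map_mul, map_mul, hC, hT_all]

variable {R : Type*} [CommRing R]

theorem coeff_toLaurent_trunc (p : R[T;T⁻¹]) (n : ℤ) :
    (toLaurent (trunc p)).coeff n = if 0 ≤ n then p.coeff n else 0 := by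
  induction p using LaurentPolynomial.induction_on' with
  | add p q hp hq =>
    simp only [map_add, AddMonoidAlgebra.coeff_add, Finsupp.add_apply, hp, hq]
    split_ifs <;> simp
  | C_mul_T m a =>
    rw [trunc_C_mul_T]
    split_ifs <;> simp [← single_eq_C_mul_T, Finsupp.single_apply, *] <;> omega

theorem T_add_T_neg_mem_adjoin (n : ℤ) :
    (T n + T (-n) : R[T;T⁻¹]) ∈ Algebra.adjoin R {T 1 + T (-1)} := by
  wlog hn : 0 ≤ n generalizing n
  · simpa [add_comm] using this (-n) (by omega)
  lift n to ℕ using hn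
  rw [Algebra.adjoin_singleton_eq_range_aeval]
  refine ⟨dickson 1 (1 : R) n, ?_⟩
  have h : (T 1 : R[T;T⁻¹]) * T (-1) = 1 := by rw [← T_add]; simp
  rw [AlgHom.toRingHom_eq_coe, RingHom.coe_coe, aeval_def, ← eval_map, map_dickson, map_one,
    dickson_one_one_eval_add_inv _ _ h, T_pow, T_pow]
  simp

theorem add_invert_mem_adjoin (p : R[T;T⁻¹]) :
    p + invert p ∈ Algebra.adjoin R {T 1 + T (-1)} := by
  induction p using LaurentPolynomial.induction_on' with
  | add p q hp hq => simpa [add_add_add_comm] using add_mem hp hq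
  | C_mul_T n a =>
    rw [map_mul, invert_C, invert_T, ← mul_add, C_eq_algebraMap]
    exact mul_mem (Subalgebra.algebraMap_mem _ a) (T_add_T_neg_mem_adjoin n)

theorem mem_adjoin_of_invert_eq_self {p : R[T;T⁻¹]} (hp : invert p = p) :
    p ∈ Algebra.adjoin R {T 1 + T (-1)} := by
  have hp_eq : p = toLaurent (trunc p) + invert (toLaurent (trunc p)) - C (p.coeff 0) := by
    ext n
    have hsymm : p.coeff (-n) = p.coeff n := by simpa using congr(($hp).coeff n)
    simp only [AddMonoidAlgebra.coeff_sub, AddMonoidAlgebra.coeff_add, Finsupp.sub_apply,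
      Finsupp.add_apply, invert_apply, coeff_toLaurent_trunc, C_apply]
    split_ifs <;> first | omega | simp_all
  rw [hp_eq, C_eq_algebraMap]
  exact sub_mem (add_invert_mem_adjoin _) (Subalgebra.algebraMap_mem _ _)

theorem invert_eq_self_iff_mem_adjoin {p : R[T;T⁻¹]} :
    invert p = p ↔ p ∈ Algebra.adjoin R {T 1 + T (-1)} := by
  refine ⟨mem_adjoin_of_invert_eq_self, fun hp => ?_⟩
  rw [Algebra.adjoin_singleton_eq_range_aeval] at hp
  obtain ⟨f, rfl⟩ := hp
  change invert (aeval _ f) = aeval _ f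
  rw [← aeval_algHom_apply]
  simp [add_comm]

end LaurentPolynomial

open LaurentPolynomial in
/-- let `σ` be the ring automorphism of the Laurent polynomial ring
`ℤ[y, y⁻¹]` determined by `σ(y) = y⁻¹`.  The subring of elements fixed by `σ` is exactly
the subring generated by `y + y⁻¹`: a Laurent polynomial `p` satisfies `σ(p) = p` if and
only if `p = f(y + y⁻¹)` for some polynomial `f ∈ ℤ[X]`. -/
theorem stmt_7 (σ : LaurentPolynomial ℤ ≃+* LaurentPolynomial ℤ)
    (hσ : σ (T 1) = T (-1)) :
    ∀ p : LaurentPolynomial ℤ,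
      σ p = p ↔ ∃ f : Polynomial ℤ,
        p = Polynomial.aeval ((T 1 + T (-1) : LaurentPolynomial ℤ)) f := by
  have hσ_invert : (σ : ℤ[T;T⁻¹] →+* ℤ[T;T⁻¹]) = (invert : ℤ[T;T⁻¹] ≃ₐ[ℤ] ℤ[T;T⁻¹]) :=
    ringHom_ext_of_T_one (fun _ => by simp) (by simpa using hσ)
  intro p
  rw [show σ p = invert p from RingHom.congr_fun hσ_invert p, invert_eq_self_iff_mem_adjoin,
    Algebra.adjoin_singleton_eq_range_aeval, AlgHom.mem_range]
  simp only [eq_comm]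
end
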